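/- arXiv:2106.03942 — 2 statements merged into one kernel-verified Lean document; each statement's English description precedes it below -/
import Mathlib

section
/- Fix a complex number q with 0 < |q| < 1 and let (a_i)_{i≥0} be a sequence of complex numbers such that the doubly-indexed family ( a_i · q^{−i(j−i)} C_q(j+i, 2i) · (q^{j²} − q^{(j+1)²}) ) over pairs 0 ≤ i ≤ j is absolutely summable. Define f_j := ∑_{i=0}^{j} q^{−i(j−i)} C_q(j+i, 2i) a_i. Then the series ∑_{i≥0} a_i · q^{i²}/(q^{i+1};q)_i and ∑_{j≥0} f_j · (q^{j²} − q^{(j+1)²}) both converge and are equal. -/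
/-!
Put `j = i + k`. Since `C_q(k + 2i, 2i) = (q^{k+1}; q)_{2i} / (q; q)_{2i}`, the `i`-th row of the
double series is `q^{i²} / (q; q)_{2i}` times `∑_k q^{k² + ik} (q^{k+1}; q)_{2i} (1 - q^{2i+2k+1})`,
and this last series equals `(q; q)_i`: for `i = 0` it telescopes, and the step from `i` to `i + 1`
multiplies it by `1 - q^{i+1}` because the difference telescopes as well (a creative-telescoping
certificate). Hence the row sums are `q^{i²} / (q^{i+1}; q)_i`, the column sums are the finite
sums `f_j (q^{j²} - q^{(j+1)²})`, and absolute summability lets us sum the double series both ways.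
-/

/-- The q-Pochhammer symbol `(a;q)_m = ∏_{l=0}^{m-1} (1 - a q^l)`. -/
noncomputable def qPoch (a q : ℂ) (m : ℕ) : ℂ := ∏ l ∈ Finset.range m, (1 - a * q ^ l)

/-- The Gaussian binomial coefficient `C_q(m,r) = (q;q)_m / ((q;q)_r (q;q)_{m-r})`. -/
noncomputable def qBinom (q : ℂ) (m r : ℕ) : ℂ :=
  qPoch q q m / (qPoch q q r * qPoch q q (m - r))

theorem Summable.hasSum_sub_succ {G : Type*} [AddCommGroup G] [TopologicalSpace G]
    [IsTopologicalAddGroup G] {f : ℕ → G} (hf : Summable f) :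
    HasSum (fun k => f k - f (k + 1)) (f 0) := by
  have hshift : HasSum (fun k => f (k + 1)) (∑' k, f k - f 0) := by
    simpa using (hasSum_nat_add_iff' 1).mpr hf.hasSum
  simpa using hf.hasSum.sub hshift

theorem Summable.tsum_row_sums_eq_tsum_col_sums {α β γ : Type*} [AddCommGroup α]
    [TopologicalSpace α] [IsTopologicalAddGroup α] [T2Space α] {F : β × γ → α} {r : β → α}
    {c : γ → α} (hF : Summable F) (hr : ∀ b, HasSum (fun x => F (b, x)) (r b))
    (hc : ∀ x, HasSum (fun b => F (b, x)) (c x)) :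
    Summable r ∧ Summable c ∧ ∑' b, r b = ∑' x, c x := by
  have hrow : HasSum r (∑' p, F p) := hF.hasSum.prod_fiberwise hr
  have hcol : HasSum c (∑' p, F p) :=
    ((Equiv.prodComm γ β).hasSum_iff.mpr hF.hasSum).prod_fiberwise hc
  exact ⟨hrow.summable, hcol.summable, hrow.tsum_eq.trans hcol.tsum_eq.symm⟩

theorem hasSum_ite_le_iff {α : Type*} [AddCommMonoid α] [TopologicalSpace α] {f : ℕ → α}
    {s : α} (i : ℕ) :
    HasSum (fun j => if i ≤ j then f j else 0) s ↔ HasSum (fun k => f (i + k)) s := by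
  rw [← Function.Injective.hasSum_iff (add_right_injective i) fun j hj => ?_]
  · simp only [Function.comp_def, Nat.le_add_right, if_true]
  · exact if_neg fun hij => hj ⟨j - i, Nat.add_sub_cancel' hij⟩

section

variable {q : ℂ}

theorem summable_pow_sq_mul_comp_pow (hq : ‖q‖ < 1) {W : ℂ → ℂ} (hW : Continuous W) :
    Summable fun k : ℕ => q ^ (k ^ 2) * W (q ^ k) := by
  obtain ⟨C, hC⟩ :=
    (isCompact_closedBall (0 : ℂ) 1).exists_bound_of_continuousOn hW.continuousOn
  refine Summable.of_norm_bounded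
    ((summable_geometric_of_lt_one (norm_nonneg q) hq).mul_right C) fun k => ?_
  have hpow : ‖q ^ k‖ ≤ 1 := by
    rw [norm_pow]
    exact pow_le_one₀ (norm_nonneg q) hq.le
  rw [norm_mul, norm_pow]
  exact mul_le_mul (pow_le_pow_of_le_one (norm_nonneg q) hq.le (Nat.le_self_pow two_ne_zero k))
    (hC _ (mem_closedBall_zero_iff.mpr hpow)) (norm_nonneg _) (pow_nonneg (norm_nonneg q) k)

theorem qPoch_zero (a q : ℂ) : qPoch a q 0 = 1 := Finset.prod_range_zero _

theorem qPoch_succ (a q : ℂ) (n : ℕ) : qPoch a q (n + 1) = qPoch a q n * (1 - a * q ^ n) :=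
  Finset.prod_range_succ _ n

theorem qPoch_succ' (a q : ℂ) (n : ℕ) : qPoch a q (n + 1) = (1 - a) * qPoch (a * q) q n := by
  rw [qPoch, Finset.prod_range_succ', pow_zero, mul_one, mul_comm]
  simp only [qPoch, pow_succ', mul_assoc]

theorem qPoch_add (a q : ℂ) (m n : ℕ) :
    qPoch a q (m + n) = qPoch a q m * qPoch (a * q ^ m) q n := by
  simp only [qPoch, Finset.prod_range_add, pow_add, mul_assoc]

theorem continuous_qPoch (q : ℂ) (n : ℕ) : Continuous fun a => qPoch a q n := by
  unfold qPoch
  fun_prop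

theorem qPoch_ne_zero {a : ℂ} (ha : ‖a‖ < 1) (hq : ‖q‖ ≤ 1) (n : ℕ) : qPoch a q n ≠ 0 := by
  refine Finset.prod_ne_zero_iff.mpr fun l _ => sub_ne_zero.mpr fun h => ?_
  have : ‖a * q ^ l‖ < 1 := by
    rw [norm_mul, norm_pow]
    exact mul_lt_one_of_nonneg_of_lt_one_left (norm_nonneg a) ha (pow_le_one₀ (norm_nonneg q) hq)
  rw [← h, norm_one] at this
  exact this.false

theorem qBinom_add_left {k : ℕ} (hk : qPoch q q k ≠ 0) (r : ℕ) :
    qBinom q (k + r) r = qPoch (q * q ^ k) q r / qPoch q q r := by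
  rw [qBinom, qPoch_add, Nat.add_sub_cancel, mul_comm (qPoch q q r), mul_div_mul_left _ _ hk]

/-- At `x = q^k`, `q^{k²} rowSummand q i x = q^{k² + ik} (q^{k+1}; q)_{2i} (1 - q^{2i+2k+1})`. -/
noncomputable def rowSummand (q : ℂ) (i : ℕ) (x : ℂ) : ℂ :=
  x ^ i * qPoch (q * x) q (2 * i) * (1 - q ^ (2 * i + 1) * x ^ 2)

-- Found by Gosper's algorithm applied to
-- `rowSummand q (i + 1) - (1 - q ^ (i + 1)) * rowSummand q i`.
noncomputable def rowCertificate (q : ℂ) (i : ℕ) (x : ℂ) : ℂ :=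
  x ^ i * qPoch x q (2 * i + 1) * (1 - q ^ (i + 1) - q ^ (i + 1) * x + q ^ (3 * i + 2) * x ^ 2)

theorem rowSummand_succ (q : ℂ) (i : ℕ) (x : ℂ) :
    rowSummand q (i + 1) x = (1 - q ^ (i + 1)) * rowSummand q i x
      + (q * x ^ 2 * rowCertificate q i (q * x) - rowCertificate q i x) := by
  simp only [rowSummand, rowCertificate, show 2 * (i + 1) = 2 * i + 1 + 1 by ring,
    qPoch_succ (q * x), qPoch_succ' x, mul_comm x q]
  ring

theorem continuous_rowCertificate (q : ℂ) (i : ℕ) : Continuous (rowCertificate q i) := by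
  have := continuous_qPoch q (2 * i + 1)
  unfold rowCertificate
  fun_prop

theorem rowCertificate_one (q : ℂ) (i : ℕ) : rowCertificate q i 1 = 0 := by
  simp [rowCertificate, qPoch_succ']

theorem hasSum_rowSummand (hq : ‖q‖ < 1) (i : ℕ) :
    HasSum (fun k : ℕ => q ^ (k ^ 2) * rowSummand q i (q ^ k)) (qPoch q q i) := by
  have hsq (k : ℕ) : q ^ ((k + 1) ^ 2) = q ^ (k ^ 2) * (q * (q ^ k) ^ 2) := by ring
  induction i with
  | zero =>
    have hsum : Summable fun k : ℕ => q ^ (k ^ 2) := by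
      simpa using summable_pow_sq_mul_comp_pow hq (continuous_const (y := (1 : ℂ)))
    have h := hsum.hasSum_sub_succ
    rw [show q ^ (0 ^ 2) = qPoch q q 0 by simp [qPoch_zero]] at h
    exact h.congr_fun fun k => by rw [hsq, rowSummand, qPoch_zero]; ring
  | succ i ih =>
    have hcert := (summable_pow_sq_mul_comp_pow hq (continuous_rowCertificate q i)).hasSum_sub_succ
    have h := (ih.mul_left (1 - q ^ (i + 1))).sub hcert
    rw [pow_zero, rowCertificate_one, mul_zero, sub_zero, mul_comm, pow_succ' q i,
      ← qPoch_succ] at h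
    exact h.congr_fun fun k => by rw [rowSummand_succ, hsq, pow_succ' q k]; ring

theorem row_term_add_eq_rowSummand (hq0 : q ≠ 0) (hq1 : ‖q‖ < 1) (i k : ℕ) :
    q ^ (-(i * ((i + k : ℕ) - i) : ℤ)) * qBinom q ((i + k) + i) (2 * i) *
        (q ^ ((i + k) ^ 2) - q ^ ((i + k + 1) ^ 2))
      = q ^ (i ^ 2) / qPoch q q (2 * i) * (q ^ (k ^ 2) * rowSummand q i (q ^ k)) := by
  have hexp : (-(i * ((i + k : ℕ) - i) : ℤ)) = -((i * k : ℕ) : ℤ) := by push_cast; ring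
  rw [hexp, zpow_neg, zpow_natCast, show i + k + i = k + 2 * i by ring,
    qBinom_add_left (qPoch_ne_zero hq1 hq1.le k), rowSummand]
  field_simp [pow_ne_zero (i * k) hq0]
  ring

theorem hasSum_surgery_row (hq0 : q ≠ 0) (hq1 : ‖q‖ < 1) (i : ℕ) :
    HasSum (fun j : ℕ => if i ≤ j then
        q ^ (-(i * (j - i) : ℤ)) * qBinom q (j + i) (2 * i) * (q ^ (j ^ 2) - q ^ ((j + 1) ^ 2))
      else 0) (q ^ (i ^ 2) / qPoch (q ^ (i + 1)) q i) := by
  have hvalue : q ^ (i ^ 2) / qPoch q q (2 * i) * qPoch q q i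
      = q ^ (i ^ 2) / qPoch (q ^ (i + 1)) q i := by
    rw [two_mul, qPoch_add, ← pow_succ']
    field_simp [qPoch_ne_zero hq1 hq1.le i]
  rw [hasSum_ite_le_iff, ← hvalue]
  exact ((hasSum_rowSummand hq1 i).mul_left _).congr_fun fun k =>
    row_term_add_eq_rowSummand hq0 hq1 i k

end

/-- Analytic content of the `−1`-surgery formula: if the double family
`a_i q^{−i(j−i)} C_q(j+i,2i) (q^{j²} − q^{(j+1)²})` over pairs `0 ≤ i ≤ j`
is absolutely summable and `f_j := ∑_{i=0}^{j} q^{−i(j−i)} C_q(j+i,2i) a_i`, then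
`∑_i a_i q^{i²}/(q^{i+1};q)_i` and `∑_j f_j (q^{j²} − q^{(j+1)²})` both converge
and are equal. -/
theorem minus_one_surgery_two_bases (q : ℂ) (hq0 : 0 < ‖q‖) (hq1 : ‖q‖ < 1)
    (a f : ℕ → ℂ)
    (hsum : Summable fun p : ℕ × ℕ =>
      ‖(if p.1 ≤ p.2 then
          a p.1 * (q ^ (-(p.1 * (p.2 - p.1) : ℤ)) * qBinom q (p.2 + p.1) (2 * p.1)) *
            (q ^ (p.2 ^ 2) - q ^ ((p.2 + 1) ^ 2))
        else 0 : ℂ)‖)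
    (hf : ∀ j : ℕ, f j = ∑ i ∈ Finset.range (j + 1),
        q ^ (-(i * (j - i) : ℤ)) * qBinom q (j + i) (2 * i) * a i) :
    Summable (fun i : ℕ => a i * (q ^ (i ^ 2) / qPoch (q ^ (i + 1)) q i)) ∧
    Summable (fun j : ℕ => f j * (q ^ (j ^ 2) - q ^ ((j + 1) ^ 2))) ∧
    ∑' i : ℕ, a i * (q ^ (i ^ 2) / qPoch (q ^ (i + 1)) q i)
      = ∑' j : ℕ, f j * (q ^ (j ^ 2) - q ^ ((j + 1) ^ 2)) := by
  refine (Summable.of_norm hsum).tsum_row_sums_eq_tsum_col_sums (fun i => ?_) (fun j => ?_)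
  · refine ((hasSum_surgery_row (norm_pos_iff.mp hq0) hq1 i).mul_left (a i)).congr_fun
      fun j => ?_
    dsimp only
    split_ifs <;> ring
  · rw [hf j, Finset.sum_mul]
    convert hasSum_sum_of_ne_finset_zero (L := SummationFilter.unconditional ℕ)
      (s := Finset.range (j + 1)) fun i hi => ?_ using 1
    · refine Finset.sum_congr rfl fun i hi => ?_
      rw [if_pos (Nat.lt_succ_iff.mp (Finset.mem_range.mp hi))]
      ring
    · exact if_neg (by simpa [Nat.lt_succ_iff] using hi)
end

section
/- For every integer j ≥ 0 and every complex number q with 0 < |q| < 1, the following identity holds: ∑_{i=j}^{∞} (−1)^{i+j} q^{−(i−j)(i+j−1)/2} C_q(2i, i−j) · ([2j+1]_q / [i+j+1]_q) · q^{i²}/(q^{i+1};q)_i = q^{j²} − q^{(j+1)²}, the series on the left converging absolutely. -/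
/-!
Writing `i = j + k`, the `i`-th summand equals `(1 - q^{2j+1}) q^{j²} A(j, k)` with
`A = qSummand`, so it suffices that `∑ₖ A(j, k) = 1` for every `j`. (This is the `₁φ₁`
summation `∑ₖ (a;q)ₖ (-1)^k q^{k(k-1)/2} (c/a)^k / ((q;q)ₖ (c;q)ₖ) = (c/a;q)_∞ / (c;q)_∞`
at `a = q^{j+1}`, `c = q^{2j+2}`.) For `j = 0` the series telescopes:
`A(0, k) = H(k) - H(k + 1)` with `H(k) = (1 - q^{k+1}) A(0, k)` and `H(0) = 1`. The step
`j → j + 1` is a WZ-type certificate: `A(j, k) - A(j + 1, k) = G(j, k) - G(j, k + 1)` with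
`G = qSummandCert`, and `G(j, 0) = 0`, `G(j, k) → 0`, so `∑ₖ A(j, k)` does not depend on `j`.
Absolute convergence follows from the ratio test, as `A(j, k + 1) / A(j, k) = O(q^k)`.
-/

open Filter Topology

/-- The q-integer `[m]_q = (1 - q^m)/(1 - q)`. -/
noncomputable def qInt (q : ℂ) (m : ℕ) : ℂ := (1 - q ^ m) / (1 - q)

section
variable {R : Type*} [SeminormedRing R]

lemma summable_norm_of_succ_eq_mul {f r : ℕ → R} (hf : ∀ n, f (n + 1) = f n * r n)
    (hr : Tendsto r atTop (𝓝 0)) : Summable (fun n => ‖f n‖) := by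
  refine summable_of_ratio_norm_eventually_le one_half_lt_one ?_
  have hr' : Tendsto (fun n => ‖r n‖) atTop (𝓝 0) := by simpa using hr.norm
  filter_upwards [hr'.eventually_le_const one_half_pos] with n hn
  rw [norm_norm, norm_norm, hf, mul_comm (1 / 2 : ℝ)]
  exact (norm_mul_le _ _).trans (mul_le_mul_of_nonneg_left hn (norm_nonneg _))

lemma tendsto_pow_comp_of_le {x : R} (hx : ‖x‖ < 1) {f : ℕ → ℕ} (hf : ∀ k, k ≤ f k) :
    Tendsto (fun k => x ^ f k) atTop (𝓝 0) :=
  (tendsto_pow_atTop_nhds_zero_of_norm_lt_one hx).comp (tendsto_atTop_mono hf tendsto_id)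

end

lemma hasSum_of_eq_sub_succ {G : Type*} [AddCommGroup G] [TopologicalSpace G]
    [IsTopologicalAddGroup G] [T2Space G] {f g : ℕ → G} (hf : Summable f)
    (hfg : ∀ n, f n = g n - g (n + 1)) (hg : Tendsto g atTop (𝓝 0)) : HasSum f (g 0) := by
  rw [hf.hasSum_iff_tendsto_nat]
  simp_rw [hfg, Finset.sum_range_sub']
  simpa using (tendsto_const_nhds (x := g 0)).sub hg

lemma add_sq_eq_choose_two (j k : ℕ) :
    (j + k) ^ 2 = j ^ 2 + (j * k + (k + 1).choose 2) + (j * k + k.choose 2) := by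
  qify
  push_cast [Nat.cast_choose_two]
  ring

lemma sub_mul_add_sub_one_div_two (j k : ℕ) :
    ((j + k : ℤ) - j) * ((j + k : ℤ) + j - 1) / 2 = (j * k + k.choose 2 : ℕ) := by
  have h : ((j + k : ℤ) - j) * ((j + k : ℤ) + j - 1) = 2 * (j * k + k.choose 2 : ℕ) := by
    qify
    push_cast [Nat.cast_choose_two]
    ring
  rw [h, Int.mul_ediv_cancel_left _ two_ne_zero]

noncomputable def qSummand (q : ℂ) (j k : ℕ) : ℂ :=
  (-1) ^ k * q ^ (j * k + (k + 1).choose 2) * qPoch q q (j + k) /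
    (qPoch q q k * qPoch q q (2 * j + k + 1))

noncomputable def qSummandCert (q : ℂ) (j k : ℕ) : ℂ :=
  (1 - q ^ k) * (1 - (q ^ (j + 1) + q ^ (2 * j + 2)) * q ^ k) / (1 - q ^ (2 * j + k + 2)) *
    qSummand q j k

section
variable {q : ℂ}

lemma one_sub_pow_ne_zero (hq : ¬IsOfFinOrder q) {n : ℕ} (hn : n ≠ 0) : 1 - q ^ n ≠ 0 :=
  sub_ne_zero.2 fun h => hq (isOfFinOrder_iff_pow_eq_one.2 ⟨n, Nat.pos_of_ne_zero hn, h.symm⟩)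

lemma not_isOfFinOrder_of_norm_lt_one (hq : ‖q‖ < 1) : ¬IsOfFinOrder q := fun h => by
  obtain ⟨n, hn, hqn⟩ := isOfFinOrder_iff_pow_eq_one.1 h
  exact hq.ne (Complex.norm_eq_one_of_pow_eq_one hqn hn.ne')

lemma qPoch_self_succ (m : ℕ) : qPoch q q (m + 1) = qPoch q q m * (1 - q ^ (m + 1)) := by
  rw [qPoch, qPoch, Finset.prod_range_succ, pow_succ']

lemma qPoch_self_mul_qPoch_pow (m n : ℕ) :
    qPoch q q m * qPoch (q ^ (m + 1)) q n = qPoch q q (m + n) := by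
  simp only [qPoch, Finset.prod_range_add, ← pow_succ', mul_comm (q ^ (m + 1)), ← pow_add]
  congr 2 with l
  ring_nf

lemma qPoch_self_ne_zero (hq : ¬IsOfFinOrder q) (m : ℕ) : qPoch q q m ≠ 0 :=
  Finset.prod_ne_zero_iff.2 fun l _ => by
    rw [← pow_succ']; exact one_sub_pow_ne_zero hq l.succ_ne_zero

lemma qPoch_pow_ne_zero (hq : ¬IsOfFinOrder q) (m n : ℕ) : qPoch (q ^ (m + 1)) q n ≠ 0 :=
  right_ne_zero_of_mul (qPoch_self_mul_qPoch_pow m n ▸ qPoch_self_ne_zero hq (m + n))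

lemma qSummand_succ (hq : ¬IsOfFinOrder q) (j k : ℕ) :
    qSummand q j (k + 1) = qSummand q j k *
      (-q ^ (j + k + 1) * (1 - q ^ (j + k + 1)) /
        ((1 - q ^ (k + 1)) * (1 - q ^ (2 * j + k + 2)))) := by
  have h₁ := qPoch_self_ne_zero hq k
  have h₂ := qPoch_self_ne_zero hq (2 * j + k + 1)
  have h₃ := one_sub_pow_ne_zero hq (n := k + 1 + 1) (by omega)
  have h₄ := one_sub_pow_ne_zero hq (n := 2 * j + k + 1 + 1) (by omega)
  rw [qSummand, qSummand, Nat.choose_succ_succ (k + 1), Nat.choose_one_right,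
    show j + (k + 1) = j + k + 1 by ring, show 2 * j + (k + 1) + 1 = 2 * j + k + 1 + 1 by ring,
    qPoch_self_succ, qPoch_self_succ, qPoch_self_succ]
  field_simp
  ring

lemma qSummand_succ_left (hq : ¬IsOfFinOrder q) (j k : ℕ) :
    qSummand q (j + 1) k = qSummand q j k *
      (q ^ k * (1 - q ^ (j + k + 1)) /
        ((1 - q ^ (2 * j + k + 2)) * (1 - q ^ (2 * j + k + 3)))) := by
  have h₁ := qPoch_self_ne_zero hq k
  have h₂ := qPoch_self_ne_zero hq (2 * j + k + 1)
  have h₃ := one_sub_pow_ne_zero hq (n := 2 * j + k + 2) (by omega)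
  have h₄ := one_sub_pow_ne_zero hq (n := 2 * j + k + 3) (by omega)
  rw [qSummand, qSummand, show j + 1 + k = j + k + 1 by ring,
    show 2 * (j + 1) + k + 1 = 2 * j + k + 1 + 1 + 1 by ring,
    qPoch_self_succ, qPoch_self_succ, qPoch_self_succ]
  field_simp
  ring

lemma qSummand_zero_eq_sub (hq : ¬IsOfFinOrder q) (k : ℕ) :
    qSummand q 0 k =
      (1 - q ^ (k + 1)) * qSummand q 0 k - (1 - q ^ (k + 1 + 1)) * qSummand q 0 (k + 1) := by
  have h₁ := one_sub_pow_ne_zero hq (n := k + 1) (by omega)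
  have h₂ := one_sub_pow_ne_zero hq (n := k + 1 + 1) (by omega)
  rw [qSummand_succ hq, mul_zero, zero_add]
  field_simp
  ring

lemma qSummand_sub_succ (hq : ¬IsOfFinOrder q) (j k : ℕ) :
    qSummand q j k - qSummand q (j + 1) k = qSummandCert q j k - qSummandCert q j (k + 1) := by
  have h₁ := one_sub_pow_ne_zero hq (n := k + 1) (by omega)
  have h₂ := one_sub_pow_ne_zero hq (n := 2 * j + k + 2) (by omega)
  have h₃ := one_sub_pow_ne_zero hq (n := 2 * j + k + 3) (by omega)
  rw [qSummandCert, qSummandCert, qSummand_succ hq, qSummand_succ_left hq,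
    show 2 * j + (k + 1) + 2 = 2 * j + k + 3 by ring]
  field_simp
  ring

lemma surgery_summand_eq (hq₀ : q ≠ 0) (hq : ¬IsOfFinOrder q) (j k : ℕ) :
    (-1 : ℂ) ^ (j + k + j) *
        q ^ (-((((j + k : ℤ) - j) * ((j + k : ℤ) + j - 1)) / 2)) *
        qBinom q (2 * (j + k)) ((j + k) - j) *
        (qInt q (2 * j + 1) / qInt q ((j + k) + j + 1)) *
        (q ^ ((j + k) ^ 2) / qPoch (q ^ ((j + k) + 1)) q (j + k))
      = (1 - q ^ (2 * j + 1)) * q ^ (j ^ 2) * qSummand q j k := by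
  have h₁ := qPoch_self_ne_zero hq k
  have h₂ := qPoch_self_ne_zero hq (2 * j + k)
  have h₃ := qPoch_pow_ne_zero hq (j + k) (j + k)
  have h₄ := one_sub_pow_ne_zero hq (n := 1) one_ne_zero
  have h₅ := one_sub_pow_ne_zero hq (n := 2 * j + k + 1) (by omega)
  have h₆ := pow_ne_zero (j * k + k.choose 2) hq₀
  rw [pow_one] at h₄
  rw [show j + k + j = 2 * j + k by ring, pow_add, pow_mul, neg_one_sq, one_pow, one_mul,
    sub_mul_add_sub_one_div_two, zpow_neg, zpow_natCast, Nat.add_sub_cancel_left, qBinom,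
    show 2 * (j + k) - k = 2 * j + k by omega, two_mul, ← qPoch_self_mul_qPoch_pow]
  generalize qPoch (q ^ (j + k + 1)) q (j + k) = P at h₃ ⊢
  rw [qInt, qInt, add_sq_eq_choose_two, pow_add, pow_add, qSummand, qPoch_self_succ]
  field_simp
  ring

lemma summable_norm_qSummand (hq : ‖q‖ < 1) (j : ℕ) :
    Summable (fun k => ‖qSummand q j k‖) := by
  refine summable_norm_of_succ_eq_mul (qSummand_succ (not_isOfFinOrder_of_norm_lt_one hq) j) ?_
  have h₁ : Tendsto (fun k => q ^ (j + k + 1)) atTop (𝓝 0) :=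
    tendsto_pow_comp_of_le hq (by omega)
  have h₂ : Tendsto (fun k => q ^ (k + 1)) atTop (𝓝 0) := tendsto_pow_comp_of_le hq (by omega)
  have h₃ : Tendsto (fun k => q ^ (2 * j + k + 2)) atTop (𝓝 0) :=
    tendsto_pow_comp_of_le hq (by omega)
  have := (h₁.neg.mul ((tendsto_const_nhds (x := (1 : ℂ))).sub h₁)).div
    ((tendsto_const_nhds.sub h₂).mul (tendsto_const_nhds.sub h₃))
    (by norm_num : ((1 : ℂ) - 0) * (1 - 0) ≠ 0)
  rwa [neg_zero, zero_mul, zero_div] at this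

lemma tendsto_qSummand (hq : ‖q‖ < 1) (j : ℕ) : Tendsto (qSummand q j) atTop (𝓝 0) :=
  (summable_norm_qSummand hq j).of_norm.tendsto_atTop_zero

lemma tendsto_qSummandCert (hq : ‖q‖ < 1) (j : ℕ) :
    Tendsto (qSummandCert q j) atTop (𝓝 0) := by
  have h₁ : Tendsto (fun k => q ^ k) atTop (𝓝 0) := tendsto_pow_comp_of_le hq (by omega)
  have h₂ : Tendsto (fun k => q ^ (2 * j + k + 2)) atTop (𝓝 0) :=
    tendsto_pow_comp_of_le hq (by omega)
  have h₃ := (tendsto_const_nhds (x := (1 : ℂ))).sub (h₁.const_mul (q ^ (j + 1) + q ^ (2 * j + 2)))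
  have := ((((tendsto_const_nhds (x := (1 : ℂ))).sub h₁).mul h₃).div
    ((tendsto_const_nhds (x := (1 : ℂ))).sub h₂) (by norm_num)).mul (tendsto_qSummand hq j)
  rwa [mul_zero] at this

theorem hasSum_qSummand (hq : ‖q‖ < 1) (j : ℕ) : HasSum (qSummand q j) 1 := by
  have hq' := not_isOfFinOrder_of_norm_lt_one hq
  induction j with
  | zero =>
    have hlim : Tendsto (fun k => (1 - q ^ (k + 1)) * qSummand q 0 k) atTop (𝓝 0) := by
      simpa using ((tendsto_const_nhds (x := (1 : ℂ))).sub
        (tendsto_pow_comp_of_le hq (f := (· + 1)) (by omega))).mul (tendsto_qSummand hq 0)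
    have h₀ : (1 - q) * qSummand q 0 0 = 1 := by
      have := one_sub_pow_ne_zero hq' (n := 1) one_ne_zero
      rw [pow_one] at this
      simp [qSummand, qPoch, this]
    simpa [h₀] using hasSum_of_eq_sub_succ (summable_norm_qSummand hq 0).of_norm
      (qSummand_zero_eq_sub hq') hlim
  | succ j ih =>
    have hcert := hasSum_of_eq_sub_succ
      ((summable_norm_qSummand hq j).of_norm.sub (summable_norm_qSummand hq (j + 1)).of_norm)
      (qSummand_sub_succ hq' j) (tendsto_qSummandCert hq j)
    rw [qSummandCert, pow_zero, sub_self, zero_mul, zero_div, zero_mul] at hcert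
    simpa using ih.sub hcert
end

/-- For `0 < |q| < 1` and `j ≥ 0`, the series over `i ≥ j` (written `i = j + k`, `k ≥ 0`)
`∑_{i≥j} (−1)^{i+j} q^{−(i−j)(i+j−1)/2} C_q(2i,i−j) ([2j+1]_q/[i+j+1]_q) q^{i²}/(q^{i+1};q)_i`
converges absolutely to `q^{j²} − q^{(j+1)²}`. -/
theorem inverse_transform_of_minus_one_surgery (j : ℕ) (q : ℂ)
    (hq0 : 0 < ‖q‖) (hq1 : ‖q‖ < 1) :
    Summable (fun k : ℕ =>
      ‖(-1 : ℂ) ^ (j + k + j) *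
        q ^ (-((((j + k : ℤ) - j) * ((j + k : ℤ) + j - 1)) / 2)) *
        qBinom q (2 * (j + k)) ((j + k) - j) *
        (qInt q (2 * j + 1) / qInt q ((j + k) + j + 1)) *
        (q ^ ((j + k) ^ 2) / qPoch (q ^ ((j + k) + 1)) q (j + k))‖) ∧
    ∑' k : ℕ, (-1 : ℂ) ^ (j + k + j) *
        q ^ (-((((j + k : ℤ) - j) * ((j + k : ℤ) + j - 1)) / 2)) *
        qBinom q (2 * (j + k)) ((j + k) - j) *
        (qInt q (2 * j + 1) / qInt q ((j + k) + j + 1)) *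
        (q ^ ((j + k) ^ 2) / qPoch (q ^ ((j + k) + 1)) q (j + k))
      = q ^ (j ^ 2) - q ^ ((j + 1) ^ 2) := by
  have hq := not_isOfFinOrder_of_norm_lt_one hq1
  simp only [surgery_summand_eq (norm_pos_iff.1 hq0) hq, norm_mul]
  refine ⟨(summable_norm_qSummand hq1 j).mul_left _, ?_⟩
  rw [((hasSum_qSummand hq1 j).mul_left _).tsum_eq]
  ring
end
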